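/- arXiv:math/0010145 — 6 statements merged into one kernel-verified Lean document; each statement's English description precedes it below -/
import Mathlib

section
/- There exists a pair of rotations A, B ∈ SO(3) generating a free subgroup of rank two. -/
open Matrix MeasureTheory

noncomputable instance : MeasurableSpace (Matrix (Fin 3) (Fin 3) ℝ) :=
  MeasurableSpace.pi (m := fun _ : Fin 3 => MeasurableSpace.pi)

/-- `SO(3)`: the subgroup of the real orthogonal group of elements of determinant one. -/
noncomputable def SO3 : Subgroup (Matrix.unitaryGroup (Fin 3) ℝ) where
  carrier := {A | (A : Matrix (Fin 3) (Fin 3) ℝ).det = 1}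
  mul_mem' := by
    intro a b ha hb
    simp only [Set.mem_setOf_eq, Submonoid.coe_mul, Matrix.det_mul] at *
    rw [ha, hb, mul_one]
  one_mem' := by simp
  inv_mem' := by
    intro a ha
    simp only [Set.mem_setOf_eq] at *
    have : ((a⁻¹ : Matrix.unitaryGroup (Fin 3) ℝ) : Matrix (Fin 3) (Fin 3) ℝ)
        = star (a : Matrix (Fin 3) (Fin 3) ℝ) := rfl
    rw [this, Matrix.star_eq_conjTranspose, Matrix.det_conjTranspose, ha, star_one]

/-- The underlying `3 × 3` matrix of an element of `SO(3)`. -/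
noncomputable def SO3.mat (a : SO3) : Matrix (Fin 3) (Fin 3) ℝ := a.1.1

/-- The length `|I_m| = Σ_p (|s_p| + |r_p|)` of the word with multi-index
`I_m = ((s_1, r_1), …, (s_m, r_m))`. -/
def wordLen (l : List (ℤ × ℤ)) : ℕ := (l.map fun p => p.1.natAbs + p.2.natAbs).sum

/-- The word `A^{s_1} B^{r_1} ⋯ A^{s_m} B^{r_m}`. -/
noncomputable def wordEval {G : Type*} [Group G] (A B : G) (l : List (ℤ × ℤ)) : G :=
  (l.map fun p => A ^ p.1 * B ^ p.2).prod

attribute [local instance] Matrix.frobeniusNormedAddCommGroup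

/-! Świerczkowski's argument. Let `A` and `B` be the rotations by `arccos (3/5)` about the `z`- and
`x`-axes. For a reduced word `w` of length `n ≥ 1` in `A^{±1}, B^{±1}`, the matrix `5ⁿ w` is an
integer matrix, and modulo `5` each scaled letter `5 A^{±1}`, `5 B^{±1}` has rank one. A ping-pong
argument on these rank-one images shows that `5ⁿ w` sends `(0,1,0)` to a nonzero vector mod `5`,
whereas `w = 1` would make `5ⁿ w ≡ 0 mod 5`. -/

theorem FreeGroup.injective_lift_of_isReduced {α G : Type*} [Group G] (f : α → G)
    (h : ∀ p L, IsReduced (p :: L) →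
      ((p :: L).map fun x => cond x.2 (f x.1) (f x.1)⁻¹).prod ≠ 1) :
    Function.Injective (lift f) := by
  classical
  refine (injective_iff_map_eq_one _).mpr fun w hw => ?_
  rw [← mk_toWord (x := w), lift_mk] at hw
  cases hword : w.toWord with
  | nil => exact toWord_eq_nil_iff.mp hword
  | cons p L => exact absurd (hword ▸ hw) (h p L (hword ▸ isReduced_toWord))

theorem Matrix.list_prod_mulVec_mem_of_isReduced {α n R : Type*}
    [Fintype n] [DecidableEq n] [Semiring R]
    (M : α × Bool → Matrix n n R) (S : α × Bool → Set (n → R)) (v : n → R)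
    (hv : ∀ p, M p *ᵥ v ∈ S p)
    (hS : ∀ p q, (p.1 = q.1 → p.2 = q.2) → ∀ x ∈ S q, M p *ᵥ x ∈ S p) :
    ∀ {p : α × Bool} {L : List (α × Bool)}, FreeGroup.IsReduced (p :: L) →
      ((p :: L).map M).prod *ᵥ v ∈ S p
  | p, [], _ => by simpa using hv p
  | p, q :: L, hL => by
    rw [FreeGroup.isReduced_cons_cons] at hL
    rw [List.map_cons, List.prod_cons, ← mulVec_mulVec]
    exact hS p q hL.1 _ (list_prod_mulVec_mem_of_isReduced M S v hv hS hL.2)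

-- `5 A` and `5 B`.
def scaledRot : Bool → Matrix (Fin 3) (Fin 3) ℤ
  | true => !![3, -4, 0; 4, 3, 0; 0, 0, 5]
  | false => !![5, 0, 0; 0, 3, -4; 0, 4, 3]

noncomputable def rotMatrix (b : Bool) : Matrix (Fin 3) (Fin 3) ℝ :=
  (5 : ℝ)⁻¹ • (scaledRot b).map (↑)

theorem rotMatrix_mem_unitaryGroup (b : Bool) : rotMatrix b ∈ unitaryGroup (Fin 3) ℝ := by
  rw [mem_unitaryGroup_iff]
  cases b <;>
  · ext i j
    fin_cases i <;> fin_cases j <;>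
      simp [rotMatrix, scaledRot, mul_apply, Fin.sum_univ_three] <;> norm_num

theorem det_rotMatrix (b : Bool) : (rotMatrix b).det = 1 := by
  cases b <;> simp [det_fin_three, rotMatrix, scaledRot] <;> norm_num

noncomputable def rot (b : Bool) : SO3 :=
  ⟨⟨rotMatrix b, rotMatrix_mem_unitaryGroup b⟩, det_rotMatrix b⟩

noncomputable def SO3.toMatrix : SO3 →* Matrix (Fin 3) (Fin 3) ℝ :=
  (unitaryGroup (Fin 3) ℝ).subtype.comp SO3.subtype

def scaledLetter (p : Bool × Bool) : Matrix (Fin 3) (Fin 3) ℤ :=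
  cond p.2 (scaledRot p.1) (scaledRot p.1)ᵀ

theorem five_smul_toMatrix_letter (p : Bool × Bool) :
    (5 : ℝ) • SO3.toMatrix (cond p.2 (rot p.1) (rot p.1)⁻¹) = (scaledLetter p).map (↑) := by
  obtain ⟨b, _ | _⟩ := p
  · change (5 : ℝ) • star (rotMatrix b) = _
    simp [rotMatrix, scaledLetter, star_eq_conjTranspose, conjTranspose_eq_transpose_of_trivial,
      transpose_map]
  · simp [SO3.toMatrix, rot, rotMatrix, scaledLetter]

theorem map_intCast_prod_scaledLetter (L : List (Bool × Bool)) :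
    (L.map scaledLetter).prod.map ((↑) : ℤ → ℝ) =
      (5 : ℝ) ^ L.length • SO3.toMatrix (L.map fun x => cond x.2 (rot x.1) (rot x.1)⁻¹).prod := by
  change (Int.castRingHom ℝ).mapMatrix _ = _
  rw [map_list_prod, map_list_prod, List.map_map, List.map_map, ← List.length_map, List.smul_prod,
    List.map_map]
  exact congrArg _ (List.map_congr_left fun p _ => (five_smul_toMatrix_letter p).symm)

-- Modulo `5`, a reduced word beginning with the letter `p` sends `(0,1,0)` to a nonzero point of
-- the line spanned by `modFiveLine p`.
def modFiveLine : Bool × Bool → Fin 3 → ZMod 5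
  | (true, true) => ![2, 1, 0]
  | (true, false) => ![3, 1, 0]
  | (false, true) => ![0, 1, 3]
  | (false, false) => ![0, 1, 2]

theorem scaledLetter_mulVec_modFiveLine :
    ∀ p q : Bool × Bool, (p.1 = q.1 → p.2 = q.2) →
      ∃ c : ZMod 5, c ≠ 0 ∧ (scaledLetter p).map (↑) *ᵥ modFiveLine q = c • modFiveLine p := by
  decide

theorem scaledLetter_mulVec_single_one :
    ∀ p : Bool × Bool,
      ∃ c : ZMod 5, c ≠ 0 ∧ (scaledLetter p).map (↑) *ᵥ Pi.single 1 1 = c • modFiveLine p := by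
  decide

theorem map_intCast_prod_scaledLetter_mulVec_ne_zero {p : Bool × Bool} {L : List (Bool × Bool)}
    (hL : FreeGroup.IsReduced (p :: L)) :
    ((p :: L).map scaledLetter).prod.map ((↑) : ℤ → ZMod 5) *ᵥ Pi.single 1 1 ≠ 0 := by
  have : Fact (Nat.Prime 5) := ⟨Nat.prime_five⟩
  let line (q : Bool × Bool) : Set (Fin 3 → ZMod 5) :=
    {v | ∃ c : ZMod 5, c ≠ 0 ∧ v = c • modFiveLine q}
  have hmem := Matrix.list_prod_mulVec_mem_of_isReduced (fun q => (scaledLetter q).map (↑)) line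
    (Pi.single 1 1) (fun q => by simpa [line, eq_comm] using scaledLetter_mulVec_single_one q)
    (fun q q' hqq' v ⟨c, hc, hv⟩ => by
      obtain ⟨c', hc', h⟩ := scaledLetter_mulVec_modFiveLine q q' hqq'
      exact ⟨c * c', mul_ne_zero hc hc', by rw [hv, mulVec_smul, h, smul_smul]⟩) hL
  change (Int.castRingHom (ZMod 5)).mapMatrix _ *ᵥ _ ≠ 0
  rw [map_list_prod, List.map_map]
  obtain ⟨c, hc, hv⟩ := hmem
  have hline : modFiveLine p 1 = 1 := by rcases p with ⟨_ | _, _ | _⟩ <;> rfl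
  exact fun h0 => hc (by simpa [hline] using congrFun (hv.symm.trans h0) 1)

theorem injective_lift_rot : Function.Injective (FreeGroup.lift rot) := by
  refine FreeGroup.injective_lift_of_isReduced rot fun p L hL hone => ?_
  have hscaled : ((p :: L).map scaledLetter).prod = (5 : ℤ) ^ (p :: L).length • 1 := by
    apply Matrix.map_injective (f := ((↑) : ℤ → ℝ)) Int.cast_injective
    dsimp only
    rw [map_intCast_prod_scaledLetter, hone, map_one, map_smul' _ _ _ fun _ _ => Int.cast_mul ..]
    simp
  have hmod : ((p :: L).map scaledLetter).prod.map ((↑) : ℤ → ZMod 5) = 0 := by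
    rw [hscaled, map_smul' _ _ _ fun _ _ => Int.cast_mul .., Int.cast_pow,
      show ((5 : ℤ) : ZMod 5) = 0 from rfl, zero_pow (by simp), zero_smul]
  exact map_intCast_prod_scaledLetter_mulVec_ne_zero hL (by rw [hmod, zero_mulVec])

/-- There exists a pair of rotations `A, B ∈ SO(3)` generating a free subgroup of rank two,
i.e. such that the canonical homomorphism from the free group on two generators sending the
generators to `A` and `B` is injective. -/
theorem stmt_4 :
    ∃ A B : SO3, Function.Injective ⇑(FreeGroup.lift (fun b : Bool => if b then A else B)) := by
  refine ⟨rot true, rot false, ?_⟩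
  convert injective_lift_rot using 3
  funext b
  cases b <;> rfl
end

section
/- Let A, B ∈ SO(3) be rotations by angles α and β respectively, with rotation axes both in the xy-plane forming angle γ (axis of A along the x-axis). Then for any multi-index I_m with |I_m| = n, writing W(α,β,γ) = A^{s₁}B^{r₁}⋯A^{s_m}B^{r_m} as a unit quaternion depending smoothly on (α,β,γ), the second derivative with respect to α satisfies ‖∂²_α W(α,β,γ)‖² ≤ n⁴ for all (α,β,γ). -/
/-!
Each factor `qA s α` is `cos (sα) + i sin (sα)`, a unit quaternion whose `α`-derivatives are
`s • qA s α * i` and `-s² • qA s α`, while `qB` does not depend on `α`. The bounds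
`‖f‖ ≤ 1`, `‖f'‖ ≤ c`, `‖f''‖ ≤ c²` are stable under products with `c` adding up, by the
Leibniz rule `(fg)'' = f''g + 2f'g' + fg''` and `c² + 2cd + d² = (c + d)²`. Hence
`‖∂²_α W‖ ≤ (Σ_p |s_p|)² ≤ |I_m|²`.
-/

open Quaternion

/-- The quaternion `cos(sα) + i sin(sα)` representing `A^s`, where `A` is rotation by angle
`2α` about the `Ox`-axis. -/
noncomputable def qA (s : ℤ) (α : ℝ) : ℍ[ℝ] :=
  ⟨Real.cos (s * α), Real.sin (s * α), 0, 0⟩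

/-- The quaternion `cos(rβ) + sin(rβ)(i cos γ + j sin γ)` representing `B^r`, where `B` is
rotation by angle `2β` about the axis in the `xy`-plane at angle `γ` to `Ox`. -/
noncomputable def qB (r : ℤ) (β γ : ℝ) : ℍ[ℝ] :=
  ⟨Real.cos (r * β), Real.sin (r * β) * Real.cos γ, Real.sin (r * β) * Real.sin γ, 0⟩

/-- The quaternion-valued word `W_{I_m}(α,β,γ)` for the multi-index
`I_m = ((s_1,r_1),…,(s_m,r_m))`. -/
noncomputable def qWord (l : List (ℤ × ℤ)) (α β γ : ℝ) : ℍ[ℝ] :=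
  (l.map fun p => qA p.1 α * qB p.2 β γ).prod

section DerivBounds

variable {A : Type*} [NormedRing A] [NormedAlgebra ℝ A]

structure HasDerivBounds (f : ℝ → A) (c : ℝ) : Prop where
  differentiable : Differentiable ℝ f
  differentiable_deriv : Differentiable ℝ (deriv f)
  norm_le_one : ∀ x, ‖f x‖ ≤ 1
  norm_deriv_le : ∀ x, ‖deriv f x‖ ≤ c
  norm_deriv_deriv_le : ∀ x, ‖deriv (deriv f) x‖ ≤ c ^ 2

namespace HasDerivBounds

variable {f g : ℝ → A} {c d : ℝ}

theorem nonneg (hf : HasDerivBounds f c) : 0 ≤ c :=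
  (norm_nonneg _).trans (hf.norm_deriv_le 0)

theorem mono (hf : HasDerivBounds f c) (hcd : c ≤ d) : HasDerivBounds f d where
  differentiable := hf.differentiable
  differentiable_deriv := hf.differentiable_deriv
  norm_le_one := hf.norm_le_one
  norm_deriv_le x := (hf.norm_deriv_le x).trans hcd
  norm_deriv_deriv_le x := (hf.norm_deriv_deriv_le x).trans (pow_le_pow_left₀ hf.nonneg hcd 2)

theorem const {a : A} (ha : ‖a‖ ≤ 1) : HasDerivBounds (fun _ : ℝ => a) 0 where
  differentiable := differentiable_const a
  differentiable_deriv := by simp only [deriv_const']; exact differentiable_const 0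
  norm_le_one _ := ha
  norm_deriv_le _ := by simp
  norm_deriv_deriv_le _ := by simp

theorem mul (hf : HasDerivBounds f c) (hg : HasDerivBounds g d) :
    HasDerivBounds (fun x => f x * g x) (c + d) := by
  have hderiv : deriv (fun x => f x * g x) = fun x => deriv f x * g x + f x * deriv g x :=
    funext fun x => deriv_fun_mul (hf.differentiable x) (hg.differentiable x)
  have hderiv2 : ∀ x, deriv (deriv fun x => f x * g x) x =
      deriv (deriv f) x * g x + deriv f x * deriv g x +
        (deriv f x * deriv g x + f x * deriv (deriv g) x) := fun x => by
    rw [hderiv]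
    exact (((hf.differentiable_deriv x).hasDerivAt.mul (hg.differentiable x).hasDerivAt).add
      ((hf.differentiable x).hasDerivAt.mul (hg.differentiable_deriv x).hasDerivAt)).deriv
  refine ⟨hf.differentiable.mul hg.differentiable, ?_, fun x => ?_, fun x => ?_, fun x => ?_⟩
  · rw [hderiv]
    exact (hf.differentiable_deriv.mul hg.differentiable).add
      (hf.differentiable.mul hg.differentiable_deriv)
  · simpa using norm_mul_le_of_le (hf.norm_le_one x) (hg.norm_le_one x)
  · rw [hderiv]
    simpa using norm_add_le_of_le (norm_mul_le_of_le (hf.norm_deriv_le x) (hg.norm_le_one x))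
      (norm_mul_le_of_le (hf.norm_le_one x) (hg.norm_deriv_le x))
  · have hfg := norm_mul_le_of_le (hf.norm_deriv_le x) (hg.norm_deriv_le x)
    rw [hderiv2]
    calc _ ≤ c ^ 2 * 1 + c * d + (c * d + 1 * d ^ 2) :=
          norm_add_le_of_le
            (norm_add_le_of_le
              (norm_mul_le_of_le (hf.norm_deriv_deriv_le x) (hg.norm_le_one x)) hfg)
            (norm_add_le_of_le hfg
              (norm_mul_le_of_le (hf.norm_le_one x) (hg.norm_deriv_deriv_le x)))
      _ = (c + d) ^ 2 := by ring

theorem list_prod [NormOneClass A] {ι : Type*} (L : List ι) {F : ι → ℝ → A} {c : ι → ℝ}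
    (h : ∀ i ∈ L, HasDerivBounds (F i) (c i)) :
    HasDerivBounds (fun x => (L.map fun i => F i x).prod) (L.map c).sum := by
  induction L with
  | nil => simpa using const (norm_one (α := A)).le
  | cons i L ih =>
    simp only [List.map_cons, List.prod_cons, List.sum_cons]
    exact (h i List.mem_cons_self).mul (ih fun j hj => h j (List.mem_cons_of_mem i hj))

end HasDerivBounds

end DerivBounds

@[simps]
noncomputable def quatI : ℍ[ℝ] := ⟨0, 1, 0, 0⟩

lemma Quaternion.norm_eq_one_of_normSq_eq_one {q : ℍ[ℝ]} (h : normSq q = 1) : ‖q‖ = 1 := by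
  rw [normSq_eq_norm_mul_self, mul_self_eq_one_iff] at h
  exact h.resolve_right (by linarith [norm_nonneg q])

lemma norm_quatI : ‖quatI‖ = 1 :=
  norm_eq_one_of_normSq_eq_one (by rw [normSq_def']; simp)

lemma norm_qA (s : ℤ) (α : ℝ) : ‖qA s α‖ = 1 :=
  norm_eq_one_of_normSq_eq_one (by rw [normSq_def']; simp [qA])

lemma norm_qB (r : ℤ) (β γ : ℝ) : ‖qB r β γ‖ = 1 := by
  refine norm_eq_one_of_normSq_eq_one ?_
  rw [normSq_def']
  simp only [qB]
  linear_combination (Real.sin (r * β) ^ 2) * Real.sin_sq_add_cos_sq γ +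
    Real.sin_sq_add_cos_sq (r * β)

lemma hasDerivAt_qA (s : ℤ) (α : ℝ) : HasDerivAt (qA s) ((s : ℝ) • (qA s α * quatI)) α := by
  have hlin := (hasDerivAt_id α).const_mul (s : ℝ)
  have hqA : qA s = fun x => Real.cos (s * x) • (1 : ℍ[ℝ]) + Real.sin (s * x) • quatI := by
    funext x; ext <;> simp [qA]
  rw [hqA]
  refine ((hlin.cos.smul_const (1 : ℍ[ℝ])).add (hlin.sin.smul_const quatI)).congr_deriv ?_
  ext <;> simp [mul_comm]

lemma hasDerivBounds_qA (s : ℤ) : HasDerivBounds (qA s) |(s : ℝ)| := by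
  have hderiv : deriv (qA s) = fun x => (s : ℝ) • (qA s x * quatI) :=
    funext fun x => (hasDerivAt_qA s x).deriv
  have hderiv2 :
      ∀ x, HasDerivAt (deriv (qA s)) ((s : ℝ) • ((s : ℝ) • (qA s x * quatI) * quatI)) x := by
    rw [hderiv]
    exact fun x => ((hasDerivAt_qA s x).mul_const quatI).const_smul (s : ℝ)
  refine ⟨fun x => (hasDerivAt_qA s x).differentiableAt, fun x => (hderiv2 x).differentiableAt,
    fun x => (norm_qA s x).le, fun x => ?_, fun x => ?_⟩
  · simp [hderiv, norm_smul, norm_qA, norm_quatI]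
  · simp [(hderiv2 x).deriv, norm_smul, norm_qA, norm_quatI, sq]

lemma hasDerivBounds_qWord (l : List (ℤ × ℤ)) (β γ : ℝ) :
    HasDerivBounds (fun α => qWord l α β γ) (l.map fun p => |(p.1 : ℝ)|).sum :=
  HasDerivBounds.list_prod l fun p _ => by
    simpa using (hasDerivBounds_qA p.1).mul (HasDerivBounds.const (norm_qB p.2 β γ).le)

lemma sum_abs_fst_le_wordLen (l : List (ℤ × ℤ)) :
    (l.map fun p => |(p.1 : ℝ)|).sum ≤ wordLen l := by
  rw [wordLen, Nat.cast_list_sum, List.map_map]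
  exact List.sum_le_sum fun p _ => by simp [Nat.cast_natAbs]

theorem stmt_5_general (l : List (ℤ × ℤ)) (α β γ : ℝ) :
    ‖deriv (deriv fun a => qWord l a β γ) α‖ ^ 2 ≤ (wordLen l : ℝ) ^ 4 := by
  have h := (hasDerivBounds_qWord l β γ).mono (sum_abs_fst_le_wordLen l)
  calc _ ≤ ((wordLen l : ℝ) ^ 2) ^ 2 :=
        pow_le_pow_left₀ (norm_nonneg _) (h.norm_deriv_deriv_le α) 2
    _ = _ := by ring

/-- For any multi-index `I_m` with `|I_m| = n`, the quaternion-valued word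
`W(α,β,γ) = A^{s_1}B^{r_1}⋯A^{s_m}B^{r_m}` satisfies `‖∂²_α W(α,β,γ)‖² ≤ n⁴`
for all `(α,β,γ)`. -/
theorem stmt_5 (l : List (ℤ × ℤ)) (hnz : ∀ q ∈ l, q.1 ≠ 0 ∧ q.2 ≠ 0) (α β γ : ℝ) :
    ‖deriv (deriv fun a => qWord l a β γ) α‖ ^ 2 ≤ (wordLen l : ℝ) ^ 4 :=
  stmt_5_general l α β γ
end

section
/- If P(x,y) is a polynomial with real coefficients such that the resultant with respect to y of P(x,y) and y² + x² − 1 vanishes identically in x, then P(cos θ, sin θ) = 0 for all real θ. -/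
open Polynomial

/-- The `(s+r) × (s+r)` Sylvester matrix of `P` (viewed with degree `r`) and `Q` (viewed with
degree `s`): the first `s` rows contain the shifted coefficients `p_r, …, p_0` of `P`, the
remaining `r` rows the shifted coefficients `q_s, …, q_0` of `Q`. -/
def sylvester {R : Type*} [CommRing R] (P Q : Polynomial R) (r s : ℕ) :
    Matrix (Fin (s + r)) (Fin (s + r)) R :=
  Matrix.of fun i j =>
    if (i : ℕ) < s then
      (if (i : ℕ) ≤ (j : ℕ) ∧ (j : ℕ) ≤ (i : ℕ) + r then P.coeff (r - ((j : ℕ) - (i : ℕ)))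
       else 0)
    else
      (if (i : ℕ) - s ≤ (j : ℕ) ∧ (j : ℕ) ≤ (i : ℕ) - s + s then
        Q.coeff (s - ((j : ℕ) - ((i : ℕ) - s)))
       else 0)

/-- The resultant of `P` and `Q` (with respect to the outer variable), as the determinant of
the Sylvester matrix. -/
def resultant {R : Type*} [CommRing R] (P Q : Polynomial R) (r s : ℕ) : R :=
  (_root_.sylvester P Q r s).det

/-- Evaluation of `P(x,y) ∈ (ℝ[x])[y]` at `x = x₀ ∈ ℝ`, `y ∈ ℂ`. -/
noncomputable def evalXY (P : Polynomial (Polynomial ℝ)) (x₀ : ℝ) (y : ℂ) : ℂ :=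
  ((P.map (Polynomial.evalRingHom x₀)).map (algebraMap ℝ ℂ)).eval y

/-! The matrix `sylvester P Q r s` is, up to transposition and reversing the order of rows and
columns, the one of Mathlib's `Polynomial.resultant`, so the hypothesis says that `P` and
`Q = y² + x² − 1` are not coprime over `ℝ(x)`. By Gauss's lemma `Q` is irreducible over `ℝ(x)`
as soon as it has no root in `ℝ[x]`, and a root would be some `a` with `a² = 1 − x²`, whose
leading coefficient is negative. Hence `Q ∣ P` over `ℝ(x)`, and, `Q` being monic, over `ℝ[x]`;
finally `Q` vanishes at `(cos θ, sin θ)`. -/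

open Matrix

theorem sylvester_eq_transpose_submatrix_rev {R : Type*} [CommRing R] (P Q : R[X]) (r s : ℕ) :
    _root_.sylvester P Q r s =
      ((Polynomial.sylvester P Q r s).submatrix (fun i ↦ Fin.rev (i.cast (add_comm s r)))
        (fun i ↦ Fin.rev (i.cast (add_comm s r))))ᵀ := by
  ext i j
  simp only [_root_.sylvester, Polynomial.sylvester, transpose_apply, submatrix_apply, of_apply]
  obtain ⟨i, hi⟩ := i
  obtain ⟨j, hj⟩ := j
  by_cases h : i < s
  · have hcol : Fin.rev (Fin.cast (add_comm s r) ⟨i, hi⟩) =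
        Fin.natAdd r ⟨s - 1 - i, by omega⟩ := by
      ext; simp only [Fin.cast_mk, Fin.val_rev, Fin.natAdd_mk]; omega
    rw [hcol, Fin.addCases_right]
    simp only [h, if_true, Fin.val_rev, Fin.val_cast, Set.mem_Icc]
    split_ifs <;> first | rfl | omega | (congr 1; omega)
  · have hcol : Fin.rev (Fin.cast (add_comm s r) ⟨i, hi⟩) =
        Fin.castAdd s ⟨r + s - 1 - i, by omega⟩ := by
      ext; simp only [Fin.cast_mk, Fin.val_rev, Fin.castAdd_mk]; omega
    rw [hcol, Fin.addCases_left]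
    simp only [h, if_false, Fin.val_rev, Fin.val_cast, Set.mem_Icc]
    split_ifs <;> first | rfl | omega | (congr 1; omega)

theorem resultant_eq_polynomial_resultant {R : Type*} [CommRing R] (P Q : R[X]) (r s : ℕ) :
    _root_.resultant P Q r s = Polynomial.resultant P Q r s := by
  let e : Fin (s + r) ≃ Fin (r + s) := (finCongr (add_comm s r)).trans Fin.revPerm
  rw [_root_.resultant, Polynomial.resultant, sylvester_eq_transpose_submatrix_rev, det_transpose]
  exact det_submatrix_equiv_self e _

namespace Polynomial

theorem dvd_of_resultant_eq_zero {R : Type*} [CommRing R] [IsDomain R] [IsIntegrallyClosed R]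
    {P Q : R[X]} (hQ : Q.Monic) (hirr : Irreducible Q) (h : resultant P Q = 0) : Q ∣ P := by
  let φ := algebraMap R (FractionRing R)
  have hφ : Function.Injective φ := IsFractionRing.injective R (FractionRing R)
  have h' : resultant (P.map φ) (Q.map φ) = 0 := by
    rw [natDegree_map_eq_of_injective hφ, natDegree_map_eq_of_injective hφ, resultant_map_map, h,
      map_zero]
  have hirr' : Irreducible (Q.map φ) := hQ.irreducible_iff_irreducible_map_fraction_map.mp hirr
  have hdvd : Q.map φ ∣ P.map φ := by
    by_contra hnd
    exact (resultant_eq_zero_iff.mp h').2 (hirr'.coprime_iff_not_dvd.mpr hnd).symm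
  exact (map_dvd_map φ hφ hQ).mp hdvd

theorem sq_ne_of_leadingCoeff_neg {R : Type*} [CommRing R] [LinearOrder R] [IsStrictOrderedRing R]
    {p : R[X]} (hp : p.leadingCoeff < 0) (a : R[X]) : a ^ 2 ≠ p := by
  rintro rfl
  rw [leadingCoeff_pow] at hp
  exact (sq_nonneg _).not_gt hp

theorem irreducible_X_sq_add_C_X_sq_sub_one {R : Type*} [CommRing R] [LinearOrder R]
    [IsStrictOrderedRing R] : Irreducible (X ^ 2 + C (X ^ 2 - 1) : R[X][X]) := by
  have hmonic : (X ^ 2 + C (X ^ 2 - 1) : R[X][X]).Monic := monic_X_pow_add_C _ two_ne_zero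
  have hdeg : (X ^ 2 + C (X ^ 2 - 1) : R[X][X]).natDegree = 2 := natDegree_X_pow_add_C
  rw [hmonic.irreducible_iff_roots_eq_zero_of_degree_le_three (by omega) (by omega),
    Multiset.eq_zero_iff_forall_notMem]
  intro a ha
  rw [mem_roots hmonic.ne_zero, IsRoot.def] at ha
  simp only [eval_add, eval_pow, eval_X, eval_C] at ha
  refine sq_ne_of_leadingCoeff_neg ?_ a (eq_neg_of_add_eq_zero_left ha)
  rw [leadingCoeff_neg, leadingCoeff_X_pow_sub_one two_pos]
  exact neg_one_lt_zero

end Polynomial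

/-- If the resultant with respect to `y` of `P(x,y)` and `y² + x² − 1` vanishes identically
in `x`, then `P(cos θ, sin θ) = 0` for all real `θ`. -/
theorem stmt_8 (P : Polynomial (Polynomial ℝ))
    (h : _root_.resultant P (Polynomial.X ^ 2 + Polynomial.C (Polynomial.X ^ 2 - 1))
        P.natDegree 2 = 0) :
    ∀ θ : ℝ, (P.map (Polynomial.evalRingHom (Real.cos θ))).eval (Real.sin θ) = 0 := by
  set Q : ℝ[X][X] := X ^ 2 + C (X ^ 2 - 1)
  have hQ : Q.Monic := monic_X_pow_add_C _ two_ne_zero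
  have hQ_deg : Q.natDegree = 2 := natDegree_X_pow_add_C
  rw [resultant_eq_polynomial_resultant, ← hQ_deg] at h
  obtain ⟨S, rfl⟩ := dvd_of_resultant_eq_zero hQ irreducible_X_sq_add_C_X_sq_sub_one h
  intro θ
  have hQ_circle : (Q.map (evalRingHom (Real.cos θ))).eval (Real.sin θ) = 0 := by
    simp only [Q, Polynomial.map_add, Polynomial.map_pow, map_X, map_C, eval_add, eval_pow, eval_X,
      eval_C, coe_evalRingHom, eval_sub, eval_one]
    linear_combination Real.sin_sq_add_cos_sq θ
  rw [Polynomial.map_mul, eval_mul, hQ_circle, zero_mul]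
end

section
/- Markov's inequality for polynomials: if F is a real polynomial of degree at most n, then max_{x∈[−1,1]} |F′(x)| ≤ n² · max_{x∈[−1,1]} |F(x)|. -/
/-!
Markov's inequality is Schur's inequality applied to `F'`, whose hypothesis is supplied
by Bernstein's inequality `√(1 - x²) |F'(x)| ≤ n max |F|`.

Schur: if `deg q < n` and `√(1 - x²) |q(x)| ≤ M` on `[-1, 1]`, then `|q| ≤ n M` there.
Where `|x| ≤ cos (π / 2n)` this holds because `√(1 - x²) ≥ sin (π / 2n) ≥ 1 / n`. To the
right of all zeros `t_k` of `T_n`, interpolate `q` at them: the Lagrange basis polynomials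
evaluated at `x` have the signs of `T_n'(t_k)`, and `|q(t_k)| ≤ (M / n) |T_n'(t_k)|`, so
`|q(x)| ≤ (M / n) T_n'(x)`, which is at most `n M` because `T_n' = n U_{n-1}` and
`|U_{n-1}| ≤ n`.

Bernstein is Schur at `x = 1`: writing `p = ∑ c_m T_m`, the polynomial
`q = ∑ c_m sin (m φ) U_{m-1}` has degree `< n`, satisfies
`sin θ q(cos θ) = (p(cos (φ - θ)) - p(cos (φ + θ))) / 2`, hence
`|sin θ q(cos θ)| ≤ max |p|`, and `q(1) = sin φ p'(cos φ)`.
-/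

open Polynomial Real

namespace Lagrange

open Finset

variable {ι : Type*} [DecidableEq ι] {s : Finset ι} {v : ι → ℝ}

theorem eval_basis_mul_eval_derivative_nodal (hvs : Set.InjOn v s) {i : ι} (hi : i ∈ s)
    (x : ℝ) :
    (Lagrange.basis s v i).eval x * (derivative (nodal s v)).eval (v i) =
      (nodal (s.erase i) v).eval x := by
  have hw := nodalWeight_ne_zero hvs hi
  rw [nodalWeight_eq_eval_derivative_nodal hi, Ne, inv_eq_zero] at hw
  rw [basis_eq_prod_sub_inv_mul_nodal_div hi, ← nodal_erase_eq_nodal_div hi,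
    nodalWeight_eq_eval_derivative_nodal hi, eval_mul, eval_C, mul_right_comm,
    inv_mul_cancel₀ hw, one_mul]

theorem abs_eval_le_mul_eval_derivative_nodal (hvs : Set.InjOn v s) {G : ℝ[X]}
    (hG : G.degree < #s) {M x : ℝ}
    (hGv : ∀ i ∈ s, |G.eval (v i)| ≤ M * |(derivative (nodal s v)).eval (v i)|)
    (hx : ∀ i ∈ s, v i ≤ x) :
    |G.eval x| ≤ M * (derivative (nodal s v)).eval x := by
  have hbasis : ∀ i ∈ s,
      |(derivative (nodal s v)).eval (v i)| * |(Lagrange.basis s v i).eval x| =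
        (nodal (s.erase i) v).eval x := fun i hi => by
    have hnonneg : 0 ≤ (nodal (s.erase i) v).eval x := by
      rw [eval_nodal]
      exact prod_nonneg fun j hj => sub_nonneg.2 (hx j (mem_of_mem_erase hj))
    rw [← abs_mul, mul_comm, eval_basis_mul_eval_derivative_nodal hvs hi, abs_of_nonneg hnonneg]
  calc |G.eval x| = |∑ i ∈ s, G.eval (v i) * (Lagrange.basis s v i).eval x| := by
        conv_lhs => rw [eq_interpolate hvs hG]
        simp [interpolate_apply, eval_finsetSum]
    _ ≤ ∑ i ∈ s,
          M * (|(derivative (nodal s v)).eval (v i)| * |(Lagrange.basis s v i).eval x|) := by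
        refine (abs_sum_le_sum_abs _ _).trans (sum_le_sum fun i hi => ?_)
        rw [abs_mul, ← mul_assoc]
        exact mul_le_mul_of_nonneg_right (hGv i hi) (abs_nonneg _)
    _ = M * (derivative (nodal s v)).eval x := by
        rw [← mul_sum, sum_congr rfl hbasis, derivative_nodal, eval_finsetSum]

end Lagrange

namespace Polynomial.Chebyshev

open Finset

/-- By `roots_T_real`, the zeros of `T_n` are `cos (zeroAngle n k)` for `k < n`. -/
noncomputable def zeroAngle (n k : ℕ) : ℝ := (2 * k + 1) * π / (2 * n)

theorem zeroAngle_zero (n : ℕ) : zeroAngle n 0 = π / (2 * n) := by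
  simp [zeroAngle]

theorem zeroAngle_mem_Ioo {n k : ℕ} (hk : k < n) : zeroAngle n k ∈ Set.Ioo 0 π := by
  have hk' : (2 * k + 1 : ℝ) < 2 * n := by exact_mod_cast (by omega : 2 * k + 1 < 2 * n)
  have hn : (0 : ℝ) < n := by exact_mod_cast (by omega : 0 < n)
  refine ⟨by unfold zeroAngle; positivity, ?_⟩
  rw [zeroAngle, div_lt_iff₀ (by positivity)]
  nlinarith [pi_pos]

theorem injOn_cos_zeroAngle (n : ℕ) :
    Set.InjOn (fun k => cos (zeroAngle n k)) (range n) :=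
  (range n).nodup_map_iff_injOn.mp (roots_T_real_nodup n)

theorem cos_zeroAngle_le {n k : ℕ} (hk : k < n) :
    cos (zeroAngle n k) ≤ cos (zeroAngle n 0) := by
  refine cos_le_cos_of_nonneg_of_le_pi (zeroAngle_mem_Ioo (by omega)).1.le
    (zeroAngle_mem_Ioo hk).2.le ?_
  unfold zeroAngle
  gcongr
  simp

theorem T_eq_C_mul_nodal (n : ℕ) :
    T ℝ n =
      Polynomial.C (2 ^ (n - 1)) * Lagrange.nodal (range n) (fun k => cos (zeroAngle n k)) := by
  have hroots : (T ℝ n).roots = ((range n).image fun k => cos (zeroAngle n k)).val :=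
    roots_T_real n
  have hcard : Multiset.card (T ℝ n).roots = (T ℝ n).natDegree := by
    rw [hroots, Finset.card_val, card_image_of_injOn (injOn_cos_zeroAngle n)]
    simp
  conv_lhs => rw [← C_leadingCoeff_mul_prod_multiset_X_sub_C hcard]
  rw [hroots, leadingCoeff_T, Int.natAbs_natCast, ← Finset.prod_eq_multiset_prod,
    prod_image (injOn_cos_zeroAngle n), Lagrange.nodal]

theorem eval_derivative_T_cos_mul_sin (n : ℤ) (θ : ℝ) :
    (derivative (T ℝ n)).eval (cos θ) * sin θ = n * sin (n * θ) := by
  rw [T_derivative_eq_U, eval_mul, eval_intCast, mul_assoc, U_real_cos]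
  push_cast
  ring_nf

theorem abs_eval_derivative_T_cos_zeroAngle_mul_sin {n k : ℕ} (hk : k < n) :
    |(derivative (T ℝ n)).eval (cos (zeroAngle n k))| * sin (zeroAngle n k) = n := by
  obtain ⟨h0, hπ⟩ := zeroAngle_mem_Ioo hk
  have hnθ : (n : ℝ) * zeroAngle n k = k * π + π / 2 := by
    have : (n : ℝ) ≠ 0 := by exact_mod_cast (by omega : n ≠ 0)
    unfold zeroAngle
    field_simp
  rw [← abs_of_pos (sin_pos_of_pos_of_lt_pi h0 hπ), ← abs_mul,
    eval_derivative_T_cos_mul_sin]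
  push_cast
  rw [hnθ, sin_add_pi_div_two, cos_nat_mul_pi, abs_mul, abs_pow, abs_neg, abs_one, one_pow,
    mul_one, Nat.abs_cast]

theorem abs_eval_U_le {x : ℝ} (hx : |x| ≤ 1) (m : ℕ) : |(U ℝ m).eval x| ≤ m + 1 := by
  induction m with
  | zero => simp
  | succ m ih =>
    have hT := abs_eval_T_real_le_one ((m : ℤ) + 1) hx
    rw [Nat.cast_succ, U_eq_X_mul_U_add_T, eval_add, eval_mul, eval_X]
    calc _ ≤ |x| * |(U ℝ m).eval x| + |(T ℝ ((m : ℤ) + 1)).eval x| :=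
          (abs_add_le _ _).trans_eq (by rw [abs_mul])
      _ ≤ 1 * (m + 1) + 1 := by gcongr
      _ = _ := by push_cast; ring

theorem eval_derivative_T_le {x : ℝ} (hx : |x| ≤ 1) (n : ℕ) :
    (derivative (T ℝ n)).eval x ≤ n ^ 2 := by
  rcases n.eq_zero_or_pos with rfl | hn
  · simp
  obtain ⟨m, rfl⟩ := Nat.exists_eq_add_of_lt hn
  have hU := (le_abs_self _).trans (abs_eval_U_le hx m)
  rw [T_derivative_eq_U, eval_mul, eval_intCast]
  push_cast
  simp only [zero_add, add_sub_cancel_right]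
  nlinarith

theorem abs_eval_le_mul_eval_derivative_T {n : ℕ} {q : ℝ[X]} (hq : q.degree < n) {M x : ℝ}
    (hqk : ∀ k < n, |q.eval (cos (zeroAngle n k))| ≤
      M * |(derivative (T ℝ n)).eval (cos (zeroAngle n k))|)
    (hx : cos (zeroAngle n 0) ≤ x) :
    |q.eval x| ≤ M * (derivative (T ℝ n)).eval x := by
  have hpow : (0 : ℝ) < 2 ^ (n - 1) := by positivity
  simp only [T_eq_C_mul_nodal n, derivative_C_mul, eval_mul, eval_C, abs_mul,
    abs_of_pos hpow, ← mul_assoc] at hqk ⊢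
  refine Lagrange.abs_eval_le_mul_eval_derivative_nodal (injOn_cos_zeroAngle n) (by simpa)
    (fun k hk => hqk k (mem_range.mp hk)) fun k hk => ?_
  exact (cos_zeroAngle_le (mem_range.mp hk)).trans hx

end Polynomial.Chebyshev

open Polynomial.Chebyshev

namespace Polynomial

section Schur

variable {n : ℕ} {q : ℝ[X]} {M : ℝ}

theorem abs_eval_le_of_cos_pi_div_le (hn : 0 < n) (hq : q.degree < n)
    (hM : ∀ x ∈ Set.Icc (-1 : ℝ) 1, √(1 - x ^ 2) * |q.eval x| ≤ M) {x : ℝ}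
    (hx : cos (π / (2 * n)) ≤ x) (hx1 : x ≤ 1) : |q.eval x| ≤ n * M := by
  have hn' : (0 : ℝ) < n := by exact_mod_cast hn
  have hM0 : 0 ≤ M :=
    (mul_nonneg (sqrt_nonneg _) (abs_nonneg _)).trans (hM 1 ⟨by norm_num, le_rfl⟩)
  have hnodes : ∀ k < n, |q.eval (cos (zeroAngle n k))| ≤
      M / n * |(derivative (T ℝ n)).eval (cos (zeroAngle n k))| := fun k hk => by
    obtain ⟨h0, hπ⟩ := zeroAngle_mem_Ioo hk
    have hT := abs_eval_derivative_T_cos_zeroAngle_mul_sin hk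
    have hqk := hM (cos (zeroAngle n k)) ⟨neg_one_le_cos _, cos_le_one _⟩
    rw [← sin_eq_sqrt_one_sub_cos_sq h0.le hπ.le] at hqk
    rw [div_mul_eq_mul_div, le_div_iff₀ hn']
    calc |q.eval (cos (zeroAngle n k))| * n
        = |(derivative (T ℝ n)).eval (cos (zeroAngle n k))| *
            (sin (zeroAngle n k) * |q.eval (cos (zeroAngle n k))|) := by rw [← hT]; ring
      _ ≤ |(derivative (T ℝ n)).eval (cos (zeroAngle n k))| * M := by gcongr
      _ = _ := mul_comm _ _
  calc |q.eval x| ≤ M / n * (derivative (T ℝ n)).eval x :=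
        abs_eval_le_mul_eval_derivative_T hq hnodes (by rwa [zeroAngle_zero])
    _ ≤ M / n * n ^ 2 := by
        gcongr
        exact eval_derivative_T_le (abs_le.mpr ⟨(neg_one_le_cos _).trans hx, hx1⟩) n
    _ = n * M := by field_simp

theorem abs_eval_le_of_abs_le_cos_pi_div (hn : 0 < n)
    (hM : ∀ x ∈ Set.Icc (-1 : ℝ) 1, √(1 - x ^ 2) * |q.eval x| ≤ M) {x : ℝ}
    (hx : |x| ≤ cos (π / (2 * n))) : |q.eval x| ≤ n * M := by
  have hπn : 0 ≤ π / (2 * n) := by positivity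
  have hπn2 : π / (2 * n) ≤ π / 2 := by
    have : (1 : ℝ) ≤ n := Nat.one_le_cast.mpr hn
    exact div_le_div_of_nonneg_left pi_pos.le two_pos (by linarith)
  have hsin : 1 ≤ n * sin (π / (2 * n)) := by
    have hn' : (n : ℝ) ≠ 0 := by positivity
    have := mul_le_sin hπn hπn2
    calc (1 : ℝ) = n * (2 / π * (π / (2 * n))) := by field_simp
      _ ≤ _ := by gcongr
  have hsqrt : sin (π / (2 * n)) ≤ √(1 - x ^ 2) := by
    rw [sin_eq_sqrt_one_sub_cos_sq hπn (by linarith [pi_pos])]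
    exact sqrt_le_sqrt (by linarith [sq_le_sq' (abs_le.mp hx).1 (abs_le.mp hx).2])
  calc |q.eval x| ≤ n * sin (π / (2 * n)) * |q.eval x| :=
        le_mul_of_one_le_left (abs_nonneg _) hsin
    _ ≤ n * (√(1 - x ^ 2) * |q.eval x|) := by rw [mul_assoc]; gcongr
    _ ≤ n * M := by gcongr; exact hM x (abs_le.mp (hx.trans (cos_le_one _)))

theorem abs_eval_le_of_sqrt_one_sub_sq_mul_abs_eval_le (hq : q.degree < n)
    (hM : ∀ x ∈ Set.Icc (-1 : ℝ) 1, √(1 - x ^ 2) * |q.eval x| ≤ M) {x : ℝ}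
    (hx : x ∈ Set.Icc (-1 : ℝ) 1) : |q.eval x| ≤ n * M := by
  rcases n.eq_zero_or_pos with rfl | hn
  · simp_all [Nat.WithBot.lt_zero_iff, degree_eq_bot]
  rcases le_or_gt (cos (π / (2 * n))) x with hright | hx'
  · exact abs_eval_le_of_cos_pi_div_le hn hq hM hright hx.2
  rcases le_or_gt x (-cos (π / (2 * n))) with hleft | hmid
  · have hMneg : ∀ y ∈ Set.Icc (-1 : ℝ) 1, √(1 - y ^ 2) * |(q.comp (-X)).eval y| ≤ M :=
      fun y hy => by simpa using hM (-y) ⟨neg_le_neg hy.2, neg_le.mp hy.1⟩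
    simpa using abs_eval_le_of_cos_pi_div_le hn (by rwa [degree_comp_neg_X]) hMneg
      (le_neg.mp hleft) (neg_le.mp hx.1)
  · exact abs_eval_le_of_abs_le_cos_pi_div hn hM (abs_le.mpr ⟨hmid.le, hx'.le⟩)

end Schur

theorem exists_sin_mul_eval_cos_eq (φ : ℝ) {n : ℕ} {p : ℝ[X]} (hp : p.natDegree ≤ n) :
    ∃ q : ℝ[X], q.degree < n ∧
      (∀ θ, sin θ * q.eval (cos θ) = (p.eval (cos (φ - θ)) - p.eval (cos (φ + θ))) / 2) ∧
      q.eval 1 = sin φ * (derivative p).eval (cos φ) := by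
  let T' : Polynomial.Sequence ℝ := ⟨fun m => T ℝ m, fun m => by simp⟩
  have hspan : p ∈ Submodule.span ℝ (T' '' Set.Iic n) := by
    rw [T'.span_degreeLE fun m _ => by simp [T']]
    exact mem_degreeLE.mpr (degree_le_of_natDegree_le hp)
  clear hp
  induction hspan using Submodule.span_induction with
  | mem _ hmem =>
    obtain ⟨m, hm, rfl⟩ := hmem
    refine ⟨sin (m * φ) • U ℝ ((m : ℤ) - 1), ?_, fun θ => ?_, ?_⟩
    · refine (degree_smul_le _ _).trans_lt ?_
      rcases m with _ | m
      · simp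
      · simpa using (by simpa using hm : m < n)
    · simp only [T', eval_smul, smul_eq_mul, T_real_cos]
      rw [mul_left_comm, mul_comm (sin θ), U_real_cos]
      push_cast
      rw [mul_sub, mul_add, cos_sub, cos_add]
      ring_nf
    · simp only [T', eval_smul, smul_eq_mul, U_eval_one]
      rw [mul_comm (sin φ), eval_derivative_T_cos_mul_sin]
      push_cast
      ring
  | zero => exact ⟨0, by simp, fun θ => by simp, by simp⟩
  | add p₁ p₂ _ _ h₁ h₂ =>
    obtain ⟨q₁, hq₁, hs₁, h1₁⟩ := h₁
    obtain ⟨q₂, hq₂, hs₂, h1₂⟩ := h₂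
    refine ⟨q₁ + q₂, (degree_add_le _ _).trans_lt (max_lt hq₁ hq₂), fun θ => ?_, ?_⟩
    · simp only [eval_add, mul_add, hs₁, hs₂]
      ring
    · simp only [eval_add, derivative_add, h1₁, h1₂]
      ring
  | smul a p _ h =>
    obtain ⟨q, hq, hs, h1⟩ := h
    refine ⟨a • q, (degree_smul_le _ _).trans_lt hq, fun θ => ?_, ?_⟩
    · simp only [eval_smul, smul_eq_mul, mul_left_comm (sin θ), hs]
      ring
    · simp only [eval_smul, derivative_smul, smul_eq_mul, h1]
      ring

theorem sqrt_one_sub_sq_mul_abs_eval_derivative_le {n : ℕ} {p : ℝ[X]} (hp : p.natDegree ≤ n)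
    {M : ℝ} (hM : ∀ x ∈ Set.Icc (-1 : ℝ) 1, |p.eval x| ≤ M) {x : ℝ}
    (hx : x ∈ Set.Icc (-1 : ℝ) 1) : √(1 - x ^ 2) * |(derivative p).eval x| ≤ n * M := by
  obtain ⟨q, hq, hsymm, hq1⟩ := exists_sin_mul_eval_cos_eq (arccos x) hp
  have hqM : ∀ y ∈ Set.Icc (-1 : ℝ) 1, √(1 - y ^ 2) * |q.eval y| ≤ M := fun y hy => by
    rw [← sin_arccos, ← abs_of_nonneg (sin_nonneg_of_nonneg_of_le_pi (arccos_nonneg y)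
      (arccos_le_pi y)), ← abs_mul]
    nth_rw 2 [← cos_arccos hy.1 hy.2]
    rw [hsymm, abs_div, abs_two]
    have h₁ := hM _ ⟨neg_one_le_cos (arccos x - arccos y), cos_le_one _⟩
    have h₂ := hM _ ⟨neg_one_le_cos (arccos x + arccos y), cos_le_one _⟩
    linarith [abs_sub _ _ |>.trans (add_le_add h₁ h₂)]
  have := abs_eval_le_of_sqrt_one_sub_sq_mul_abs_eval_le hq hqM (x := 1) ⟨by norm_num, le_rfl⟩
  rwa [hq1, abs_mul, sin_arccos, abs_of_nonneg (sqrt_nonneg _), cos_arccos hx.1 hx.2] at this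

end Polynomial

open Set

/-- Markov's inequality for polynomials: if `F` is a real polynomial of degree at most `n`,
then `max_{x ∈ [−1,1]} |F′(x)| ≤ n² · max_{x ∈ [−1,1]} |F(x)|`. -/
theorem stmt_10 (n : ℕ) (F : Polynomial ℝ) (hF : F.natDegree ≤ n) :
    ∀ x ∈ Icc (-1 : ℝ) 1,
      |(Polynomial.derivative F).eval x| ≤
        (n : ℝ) ^ 2 * sSup ((fun y => |F.eval y|) '' Icc (-1 : ℝ) 1) := by
  intro x hx
  set M := sSup ((fun y => |F.eval y|) '' Icc (-1 : ℝ) 1)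
  have hM : ∀ y ∈ Icc (-1 : ℝ) 1, |F.eval y| ≤ M := fun y hy =>
    le_csSup (isCompact_Icc.image F.continuous.abs).bddAbove (mem_image_of_mem _ hy)
  have hF' : (derivative F).degree < n := by
    rcases eq_or_ne F 0 with rfl | hF0
    · simp
    · exact (degree_derivative_lt hF0).trans_le (degree_le_of_natDegree_le hF)
  calc |(derivative F).eval x| ≤ n * (n * M) :=
        abs_eval_le_of_sqrt_one_sub_sq_mul_abs_eval_le hF'
          (fun y hy => sqrt_one_sub_sq_mul_abs_eval_derivative_le hF hM hy) hx
    _ = n ^ 2 * M := by ring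
end

section
/- Let A, B ∈ SO(3) be rotations by angles α and β. If A has rotation angle α, then the commutator [A,B] = ABA⁻¹B⁻¹ is a rotation whose angle θ satisfies |sin(θ/2)| ≤ C|sin(α/2)| for a constant C depending only on B; in particular as α → 0, the rotation angle of [A,B] is O(α). -/
/-!
Write `q = c + s v` with `c = cos (α/2)` real, hence central. Then `q p - p q = s (v p - p v)` has
norm at most `2 |s|`, and `q p q⁻¹ p⁻¹ - 1 = (q p - p q) q⁻¹ p⁻¹` has the same norm since `q` and `p`
are unit quaternions. The imaginary part of the commutator is that of `q p q⁻¹ p⁻¹ - 1`, so it is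
bounded by the same quantity: `C = 2` works for every `B`.
-/

open Quaternion

section NormedDivisionRing

variable {D : Type*} [NormedDivisionRing D]

theorem norm_commutator_sub_one {q p : D} (hq : q ≠ 0) (hp : p ≠ 0) :
    ‖q * p * q⁻¹ * p⁻¹ - 1‖ = ‖q * p - p * q‖ / (‖q‖ * ‖p‖) := by
  have h : q * p * q⁻¹ * p⁻¹ - 1 = (q * p - p * q) * (q⁻¹ * p⁻¹) := by
    simp [sub_mul, mul_assoc, hq, hp]
  rw [h, norm_mul, norm_mul, norm_inv, norm_inv, div_eq_mul_inv, mul_inv]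

theorem norm_mul_sub_mul_le_of_commute {q p r : D} (hr : Commute r p) :
    ‖q * p - p * q‖ ≤ 2 * ‖q - r‖ * ‖p‖ :=
  calc ‖q * p - p * q‖ = ‖(q - r) * p - p * (q - r)‖ := by
        rw [sub_mul, mul_sub, hr.eq]; abel_nf
    _ ≤ ‖(q - r) * p‖ + ‖p * (q - r)‖ := norm_sub_le _ _
    _ = 2 * ‖q - r‖ * ‖p‖ := by rw [norm_mul, norm_mul]; ring

theorem norm_commutator_sub_one_le_of_commute {q p r : D} (hq : q ≠ 0) (hp : p ≠ 0)
    (hr : Commute r p) :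
    ‖q * p * q⁻¹ * p⁻¹ - 1‖ ≤ 2 * ‖q - r‖ / ‖q‖ := by
  rw [norm_commutator_sub_one hq hp, mul_comm ‖q‖, ← div_div,
    div_le_div_iff_of_pos_right (norm_pos_iff.mpr hq), div_le_iff₀ (norm_pos_iff.mpr hp)]
  exact norm_mul_sub_mul_le_of_commute hr

end NormedDivisionRing

namespace Quaternion

theorem norm_im_le_norm (a : ℍ) : ‖a.im‖ ≤ ‖a‖ := by
  have h : normSq a.im ≤ normSq a := by
    simp only [normSq_def', re_im, imI_im, imJ_im, imK_im]
    nlinarith [sq_nonneg a.re]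
  rw [normSq_eq_norm_mul_self, normSq_eq_norm_mul_self] at h
  exact (mul_self_le_mul_self_iff (norm_nonneg _) (norm_nonneg _)).mpr h

theorem norm_coe_add_smul_sq (c s : ℝ) {v : ℍ} (hv : v.re = 0) :
    ‖(c : ℍ) + s • v‖ ^ 2 = c ^ 2 + s ^ 2 * ‖v‖ ^ 2 := by
  rw [norm_add_sq_real, inner_def]
  simp [hv, norm_smul, mul_pow]

theorem norm_cos_add_sin_smul (θ : ℝ) {v : ℍ} (hv : v.re = 0) (hv1 : ‖v‖ = 1) :
    ‖(Real.cos θ : ℍ) + Real.sin θ • v‖ = 1 := by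
  have h := norm_coe_add_smul_sq (Real.cos θ) (Real.sin θ) hv
  rw [hv1, one_pow, mul_one, Real.cos_sq_add_sin_sq] at h
  exact (pow_eq_one_iff_of_nonneg (norm_nonneg _) two_ne_zero).mp h

end Quaternion

/-- Let `B` be a rotation, represented by a unit quaternion `p`.  There is a constant `C > 0`
depending only on `B` such that for every rotation `A` by angle `α` (represented by the unit
quaternion `q = cos(α/2) + sin(α/2)·v` for a unit purely imaginary `v`), the rotation angle
`θ` of the commutator `[A,B] = ABA⁻¹B⁻¹` satisfies `|sin(θ/2)| ≤ C·|sin(α/2)|`; here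
`|sin(θ/2)| = ‖Im(q p q⁻¹ p⁻¹)‖` since `cos(θ/2) = |Re(q p q⁻¹ p⁻¹)|` for unit quaternions. -/
theorem stmt_13 (p : ℍ[ℝ]) (hp : ‖p‖ = 1) :
    ∃ C > (0 : ℝ), ∀ (α : ℝ) (v : ℍ[ℝ]), v.re = 0 → ‖v‖ = 1 →
      let q : ℍ[ℝ] := (Real.cos (α / 2) : ℍ[ℝ]) + Real.sin (α / 2) • v
      ‖(q * p * q⁻¹ * p⁻¹).im‖ ≤ C * |Real.sin (α / 2)| := by
  have hp0 : p ≠ 0 := ne_zero_of_norm_ne_zero (by simp [hp])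
  refine ⟨2, two_pos, fun α v hv hv1 => ?_⟩
  intro q
  have hq : ‖q‖ = 1 := norm_cos_add_sin_smul (α / 2) hv hv1
  have hq0 : q ≠ 0 := ne_zero_of_norm_ne_zero (by simp [hq])
  calc ‖(q * p * q⁻¹ * p⁻¹).im‖ = ‖(q * p * q⁻¹ * p⁻¹ - 1).im‖ := by simp
    _ ≤ ‖q * p * q⁻¹ * p⁻¹ - 1‖ := norm_im_le_norm _
    _ ≤ 2 * ‖q - Real.cos (α / 2)‖ / ‖q‖ :=
      norm_commutator_sub_one_le_of_commute hq0 hp0 (coe_commute _ _)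
    _ = 2 * |Real.sin (α / 2)| := by simp [q, hq, norm_smul, hv1]
end

section
/- If X and Y are unit quaternions with X = cos φ + sin φ · u and Y = cos ψ + sin ψ · v (u, v purely imaginary unit quaternions), then the real part of the commutator satisfies 1 − Re(XYX⁻¹Y⁻¹) ≤ 4 sin²φ sin²ψ; consequently the rotation angle of the commutator of the corresponding rotations is at most C·|φ||ψ| for an absolute constant C when φ, ψ are small. -/
open Quaternion
open scoped RealInnerProductSpace

set_option maxHeartbeats 1000000 in

/-- For unit quaternions `X = cos φ + sin φ·u` and `Y = cos ψ + sin ψ·v` (with `u, v` purely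
imaginary unit quaternions), `1 − Re(XYX⁻¹Y⁻¹) ≤ 4 sin²φ sin²ψ`; consequently the rotation
angle `θ` of the commutator, determined by `cos(θ/2) = |Re(XYX⁻¹Y⁻¹)|`, is at most `C·|φ||ψ|`
for an absolute constant `C` when `φ, ψ` are small. -/
theorem stmt_16 (u v : ℍ[ℝ]) (hu0 : u.re = 0) (hu : ‖u‖ = 1) (hv0 : v.re = 0) (hv : ‖v‖ = 1) :
    (∀ φ ψ : ℝ,
      let X : ℍ[ℝ] := (Real.cos φ : ℍ[ℝ]) + Real.sin φ • u
      let Y : ℍ[ℝ] := (Real.cos ψ : ℍ[ℝ]) + Real.sin ψ • v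
      1 - (X * Y * X⁻¹ * Y⁻¹).re ≤ 4 * Real.sin φ ^ 2 * Real.sin ψ ^ 2) ∧
    (∃ C > (0 : ℝ), ∃ δ > (0 : ℝ), ∀ φ ψ : ℝ, |φ| ≤ δ → |ψ| ≤ δ →
      let X : ℍ[ℝ] := (Real.cos φ : ℍ[ℝ]) + Real.sin φ • u
      let Y : ℍ[ℝ] := (Real.cos ψ : ℍ[ℝ]) + Real.sin ψ • v
      2 * Real.arccos |(X * Y * X⁻¹ * Y⁻¹).re| ≤ C * |φ| * |ψ|) := by
  have hnu : u.imI ^ 2 + u.imJ ^ 2 + u.imK ^ 2 = 1 := by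
    have h := normSq_eq_norm_mul_self u
    rw [hu, normSq_def', hu0] at h
    nlinarith [h]
  have hnv : v.imI ^ 2 + v.imJ ^ 2 + v.imK ^ 2 = 1 := by
    have h := normSq_eq_norm_mul_self v
    rw [hv, normSq_def', hv0] at h
    nlinarith [h]
  have main : ∀ φ ψ : ℝ,
      (1 - (((Real.cos φ : ℍ[ℝ]) + Real.sin φ • u) * ((Real.cos ψ : ℍ[ℝ]) + Real.sin ψ • v) *
        ((Real.cos φ : ℍ[ℝ]) + Real.sin φ • u)⁻¹ * ((Real.cos ψ : ℍ[ℝ]) + Real.sin ψ • v)⁻¹).re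
        ≤ 4 * Real.sin φ ^ 2 * Real.sin ψ ^ 2) ∧
      |(((Real.cos φ : ℍ[ℝ]) + Real.sin φ • u) * ((Real.cos ψ : ℍ[ℝ]) + Real.sin ψ • v) *
        ((Real.cos φ : ℍ[ℝ]) + Real.sin φ • u)⁻¹ * ((Real.cos ψ : ℍ[ℝ]) + Real.sin ψ • v)⁻¹).re|
        ≤ 1 := by
    intro φ ψ
    set X : ℍ[ℝ] := (Real.cos φ : ℍ[ℝ]) + Real.sin φ • u with hXdef
    set Y : ℍ[ℝ] := (Real.cos ψ : ℍ[ℝ]) + Real.sin ψ • v with hYdef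
    have hpc φ' := Real.sin_sq_add_cos_sq φ'
    have hX1 : ‖X‖ = 1 := by
      have h : ‖X‖ * ‖X‖ = 1 := by
        rw [← normSq_eq_norm_mul_self, normSq_def']
        simp [hXdef, hu0]
        nlinarith [hnu, hpc φ]
      rcases mul_self_eq_one_iff.mp h with h1 | h1
      · exact h1
      · nlinarith [norm_nonneg X]
    have hY1 : ‖Y‖ = 1 := by
      have h : ‖Y‖ * ‖Y‖ = 1 := by
        rw [← normSq_eq_norm_mul_self, normSq_def']
        simp [hYdef, hv0]
        nlinarith [hnv, hpc ψ]
      rcases mul_self_eq_one_iff.mp h with h1 | h1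
      · exact h1
      · nlinarith [norm_nonneg Y]
    have hXi : X⁻¹ = star X := by
      apply inv_eq_of_mul_eq_one_right
      rw [Quaternion.self_mul_star]
      have : normSq X = 1 := by rw [normSq_eq_norm_mul_self, hX1]; ring
      rw [this]; norm_cast
    have hYi : Y⁻¹ = star Y := by
      apply inv_eq_of_mul_eq_one_right
      rw [Quaternion.self_mul_star]
      have : normSq Y = 1 := by rw [normSq_eq_norm_mul_self, hY1]; ring
      rw [this]; norm_cast
    have hre : (X * Y * X⁻¹ * Y⁻¹).re = ⟪X * Y, Y * X⟫ := by
      simp [hXi, hYi, inner_def, star_mul, mul_assoc]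
    have hsub : X * Y - Y * X = (Real.sin φ * Real.sin ψ) • (u * v - v * u) := by
      ext <;>
        simp [hXdef, hYdef, Quaternion.re_mul, Quaternion.imI_mul, Quaternion.imJ_mul,
          Quaternion.imK_mul, hu0, hv0] <;> ring
    have hcross : ‖u * v - v * u‖ ≤ 2 := by
      calc ‖u * v - v * u‖ ≤ ‖u * v‖ + ‖v * u‖ := norm_sub_le _ _
        _ = 2 := by rw [norm_mul, norm_mul, hu, hv]; ring
    have hnormsub : ‖X * Y - Y * X‖ ≤ 2 * (|Real.sin φ| * |Real.sin ψ|) := by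
      rw [hsub, norm_smul, Real.norm_eq_abs, abs_mul]
      have h0 : (0:ℝ) ≤ |Real.sin φ| * |Real.sin ψ| := by positivity
      nlinarith [hcross, norm_nonneg (u * v - v * u)]
    have hsq : ‖X * Y - Y * X‖ ^ 2 = 2 - 2 * ⟪X * Y, Y * X⟫ := by
      rw [norm_sub_sq_real, norm_mul, norm_mul, hX1, hY1]; ring
    have hbound : 1 - (X * Y * X⁻¹ * Y⁻¹).re ≤ 4 * Real.sin φ ^ 2 * Real.sin ψ ^ 2 := by
      rw [hre]
      have h1 : ‖X * Y - Y * X‖ ^ 2 ≤ 4 * Real.sin φ ^ 2 * Real.sin ψ ^ 2 := by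
        have h0 : (0:ℝ) ≤ ‖X * Y - Y * X‖ := norm_nonneg _
        nlinarith [hnormsub, sq_abs (Real.sin φ), sq_abs (Real.sin ψ),
          abs_nonneg (Real.sin φ), abs_nonneg (Real.sin ψ)]
      nlinarith [hsq, h1]
    refine ⟨hbound, ?_⟩
    have hnc : ‖X * Y * X⁻¹ * Y⁻¹‖ = 1 := by
      rw [norm_mul, norm_mul, norm_mul, norm_inv, norm_inv, hX1, hY1]; norm_num
    have h2 : (X * Y * X⁻¹ * Y⁻¹).re ^ 2 ≤ 1 := by
      have h := normSq_eq_norm_mul_self (X * Y * X⁻¹ * Y⁻¹)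
      rw [hnc, normSq_def'] at h
      nlinarith [sq_nonneg (X * Y * X⁻¹ * Y⁻¹).imI, sq_nonneg (X * Y * X⁻¹ * Y⁻¹).imJ,
        sq_nonneg (X * Y * X⁻¹ * Y⁻¹).imK, h]
    rw [abs_le]
    constructor <;> nlinarith [h2]
  constructor
  · intro φ ψ
    exact (main φ ψ).1
  · refine ⟨12, by norm_num, 1, by norm_num, fun φ ψ _ _ => ?_⟩
    intro X Y
    obtain ⟨h1, h2⟩ := main φ ψ
    set r : ℝ := |(X * Y * X⁻¹ * Y⁻¹).re| with hrdef
    set θ : ℝ := Real.arccos r with hθdef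
    have hθ0 : 0 ≤ θ := Real.arccos_nonneg r
    have hθπ : θ ≤ Real.pi := Real.arccos_le_pi r
    have hπ : 0 < Real.pi := Real.pi_pos
    have hcos : Real.cos θ = r := Real.cos_arccos (by nlinarith [abs_nonneg (X * Y * X⁻¹ * Y⁻¹).re]) h2
    have hone : 1 - r ≤ 4 * φ ^ 2 * ψ ^ 2 := by
      have hr : (X * Y * X⁻¹ * Y⁻¹).re ≤ r := le_abs_self _
      nlinarith [h1, Real.sin_sq_le_sq (x := φ), Real.sin_sq_le_sq (x := ψ), sq_nonneg φ,
        sq_nonneg ψ, sq_nonneg (Real.sin φ), sq_nonneg (Real.sin ψ),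
        mul_le_mul_of_nonneg_left (Real.sin_sq_le_sq (x := ψ)) (sq_nonneg (Real.sin φ)),
        mul_le_mul_of_nonneg_right (Real.sin_sq_le_sq (x := φ)) (sq_nonneg ψ)]
    have hs2 : Real.sin (θ / 2) ^ 2 ≤ 2 * (|φ| * |ψ|) ^ 2 := by
      have h := Real.sin_sq_eq_half_sub (x := θ / 2)
      rw [show 2 * (θ / 2) = θ by ring, hcos] at h
      rw [h]
      nlinarith [hone, sq_abs φ, sq_abs ψ]
    have hsin : θ / Real.pi ≤ Real.sin (θ / 2) := by
      have h := Real.mul_le_sin (x := θ / 2) (by linarith) (by linarith)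
      calc θ / Real.pi = 2 / Real.pi * (θ / 2) := by ring
        _ ≤ _ := h
    have hθsq : θ ^ 2 ≤ 2 * Real.pi ^ 2 * (|φ| * |ψ|) ^ 2 := by
      have h0 : 0 ≤ θ / Real.pi := by positivity
      have hq : (θ / Real.pi) ^ 2 ≤ 2 * (|φ| * |ψ|) ^ 2 := by
        nlinarith [hsin, hs2]
      have hq' : θ ^ 2 / Real.pi ^ 2 ≤ 2 * (|φ| * |ψ|) ^ 2 := by
        rw [← div_pow]; exact hq
      have := (div_le_iff₀ (by positivity : (0:ℝ) < Real.pi ^ 2)).mp hq'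
      nlinarith [this]
    have hπ4 : Real.pi ≤ 4 := by nlinarith [Real.pi_le_four]
    have hp0 : (0:ℝ) ≤ |φ| * |ψ| := by positivity
    have hπ2 : Real.pi ^ 2 ≤ 16 := by nlinarith [hπ, hπ4]
    have hfin : θ ^ 2 ≤ 32 * (|φ| * |ψ|) ^ 2 := by nlinarith [hθsq, hπ2, sq_nonneg (|φ| * |ψ|)]
    show 2 * θ ≤ 12 * |φ| * |ψ|
    clear_value θ
    clear hθdef hcos hθπ hθsq hs2 hsin hone hrdef h2 main h1
    clear_value r X Y
    clear r X Y u v hu0 hu hv0 hv hnu hnv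
    nlinarith [hfin, hθ0, hp0]
end
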